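/- arXiv:1101.2138 — 3 statements merged into one kernel-verified Lean document; each statement's English description precedes it below -/
import Mathlib

section
/- Let E be a complex Banach space, U an open neighborhood of a point P ∈ E, and let S, L, F : E → E satisfy S(F(x)) + L(F(x)) = S(x) for all x ∈ U. Assume that F is continuous at P with F(P) = P and is Fréchet differentiable on U, that S and L are Fréchet differentiable on U with derivative maps Σ := DS and Λ := DL continuous at P, that Λ(x) is invertible for every x ∈ U with x ↦ Λ(x)⁻¹ continuous at P, and that Λ(x)⁻¹ ∘ Σ(x) → 0 in operator norm as x → P. Then the derivative of F tends to zero at P: DF(x) → 0 in operator norm as x → P; in particular DF(P) = 0 whenever F is differentiable at P, so every eigenvalue of DF(P) has modulus less than 1. -/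
open Filter Topology

/-!
Differentiating `S ∘ F + L ∘ F = S` at `x` and applying `Λ(F x)⁻¹` gives
`DF(x) + Λ(F x)⁻¹ Σ(F x) DF(x) = Λ(F x)⁻¹ Σ(x)`. As `x → P` both coefficients
`Λ(F x)⁻¹ Σ(F x)` and `Λ(F x)⁻¹ Σ(x)` tend to `Λ(P)⁻¹ Σ(P) = 0`, so once the first
has norm at most `1/2` we get `‖DF(x)‖ ≤ 2 ‖Λ(F x)⁻¹ Σ(x)‖ → 0`.
-/

theorem tendsto_zero_of_add_mul_eq {α R : Type*} [NonUnitalSeminormedRing R] {l : Filter α}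
    {T A B : α → R} (hA : Tendsto A l (𝓝 0)) (hB : Tendsto B l (𝓝 0))
    (h : ∀ᶠ x in l, T x + B x * T x = A x) : Tendsto T l (𝓝 0) := by
  have hB_small : ∀ᶠ x in l, ‖B x‖ ≤ 1 / 2 :=
    (tendsto_zero_iff_norm_tendsto_zero.mp hB).eventually_le_const (by norm_num)
  have h2A : Tendsto (fun x => 2 * ‖A x‖) l (𝓝 0) := by
    simpa using (tendsto_zero_iff_norm_tendsto_zero.mp hA).const_mul 2
  refine squeeze_zero_norm' ?_ h2A
  filter_upwards [h, hB_small] with x hx hBx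
  have hT : ‖T x‖ ≤ ‖A x‖ + ‖B x‖ * ‖T x‖ :=
    calc ‖T x‖ = ‖A x - B x * T x‖ := by rw [← hx, add_sub_cancel_right]
      _ ≤ ‖A x‖ + ‖B x * T x‖ := norm_sub_le _ _
      _ ≤ ‖A x‖ + ‖B x‖ * ‖T x‖ := by gcongr; exact norm_mul_le _ _
  linarith [mul_le_mul_of_nonneg_right hBx (norm_nonneg (T x))]

theorem add_mul_mul_eq_mul_of_mul_eq_one {R : Type*} [Ring R] {s l f t m : R}
    (h : s * f + l * f = t) (hm : m * l = 1) : f + m * s * f = m * t := by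
  rw [← h, mul_add, ← mul_assoc m l, hm, one_mul, mul_assoc, add_comm]

theorem fderiv_comp_add_fderiv_comp_eq {𝕜 E G : Type*} [NontriviallyNormedField 𝕜]
    [NormedAddCommGroup E] [NormedSpace 𝕜 E] [NormedAddCommGroup G] [NormedSpace 𝕜 G]
    {S L : E → G} {F : E → E} {x : E} (h : (fun y => S (F y) + L (F y)) =ᶠ[𝓝 x] S)
    (hS : DifferentiableAt 𝕜 S (F x)) (hL : DifferentiableAt 𝕜 L (F x))
    (hF : DifferentiableAt 𝕜 F x) :
    (fderiv 𝕜 S (F x)).comp (fderiv 𝕜 F x) + (fderiv 𝕜 L (F x)).comp (fderiv 𝕜 F x) =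
      fderiv 𝕜 S x :=
  (((hS.hasFDerivAt.comp x hF.hasFDerivAt).add
    (hL.hasFDerivAt.comp x hF.hasFDerivAt)).congr_of_eventuallyEq h.symm).fderiv.symm

theorem stmt_2_general {E : Type*} [NormedAddCommGroup E] [NormedSpace ℂ E]
    (U : Set E) (hU : IsOpen U) (P : E) (hP : P ∈ U) (S L F : E → E)
    (heq : ∀ x ∈ U, S (F x) + L (F x) = S x)
    (hFc : ContinuousAt F P) (hFP : F P = P)
    (hFd : ∀ x ∈ U, DifferentiableAt ℂ F x)
    (hSd : ∀ x ∈ U, DifferentiableAt ℂ S x)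
    (hLd : ∀ x ∈ U, DifferentiableAt ℂ L x)
    (hSigc : ContinuousAt (fun x => fderiv ℂ S x) P)
    (Λinv : E → (E →L[ℂ] E))
    (hΛinv : ∀ x ∈ U, (fderiv ℂ L x).comp (Λinv x) = ContinuousLinearMap.id ℂ E ∧
      (Λinv x).comp (fderiv ℂ L x) = ContinuousLinearMap.id ℂ E)
    (hΛinvc : ContinuousAt Λinv P)
    (hlim : Tendsto (fun x => (Λinv x).comp (fderiv ℂ S x)) (𝓝 P) (𝓝 0)) :
    Tendsto (fun x => fderiv ℂ F x) (𝓝 P) (𝓝 0) ∧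
      fderiv ℂ F P = 0 ∧
      ∀ μ : ℂ, Module.End.HasEigenvalue (fderiv ℂ F P : E →ₗ[ℂ] E) μ → ‖μ‖ < 1 := by
  have hFt : Tendsto F (𝓝 P) (𝓝 P) := by simpa only [hFP] using hFc.tendsto
  -- In `E →L[ℂ] E`, `f * g` is definitionally `f.comp g`, so the ring lemmas above apply.
  have hzero : Λinv P * fderiv ℂ S P = 0 :=
    tendsto_nhds_unique (hΛinvc.tendsto.mul hSigc.tendsto) hlim
  have hA : Tendsto (fun x => Λinv (F x) * fderiv ℂ S x) (𝓝 P) (𝓝 0) :=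
    hzero ▸ (hΛinvc.tendsto.comp hFt).mul hSigc.tendsto
  have hDF : Tendsto (fun x => fderiv ℂ F x) (𝓝 P) (𝓝 0) := by
    refine tendsto_zero_of_add_mul_eq hA (hlim.comp hFt) ?_
    filter_upwards [hU.mem_nhds hP, hFt.eventually (hU.mem_nhds hP)] with x hx hFx
    refine add_mul_mul_eq_mul_of_mul_eq_one ?_ (hΛinv _ hFx).2
    refine fderiv_comp_add_fderiv_comp_eq ?_ (hSd _ hFx) (hLd _ hFx) (hFd x hx)
    filter_upwards [hU.mem_nhds hx] with y hy using heq y hy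
  have hDFP : fderiv ℂ F P = 0 := eq_of_tendsto_nhds hDF
  refine ⟨hDF, hDFP, fun μ hμ => ?_⟩
  rw [hDFP, ContinuousLinearMap.toLinearMap_zero] at hμ
  simp [(hμ.isNilpotent_of_isNilpotent IsNilpotent.zero).eq_zero]

/-- If `S (F x) + L (F x) = S x` on an open neighborhood `U` of `P`, `F` fixes `P` and is
continuous there, `S`, `L`, `F` are differentiable on `U` with `Σ = DS`, `Λ = DL` continuous
at `P`, `Λ x` invertible with continuous inverse at `P`, and `Λ(x)⁻¹ ∘ Σ(x) → 0` as `x → P`,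
then `DF(x) → 0` as `x → P`; in particular `DF(P) = 0`, so every eigenvalue of `DF(P)` has
modulus less than `1`. -/
theorem stmt_2 {E : Type*} [NormedAddCommGroup E] [NormedSpace ℂ E] [CompleteSpace E]
    (U : Set E) (hU : IsOpen U) (P : E) (hP : P ∈ U) (S L F : E → E)
    (heq : ∀ x ∈ U, S (F x) + L (F x) = S x)
    (hFc : ContinuousAt F P) (hFP : F P = P)
    (hFd : ∀ x ∈ U, DifferentiableAt ℂ F x)
    (hSd : ∀ x ∈ U, DifferentiableAt ℂ S x)
    (hLd : ∀ x ∈ U, DifferentiableAt ℂ L x)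
    (hSigc : ContinuousAt (fun x => fderiv ℂ S x) P)
    (hLamc : ContinuousAt (fun x => fderiv ℂ L x) P)
    (Λinv : E → (E →L[ℂ] E))
    (hΛinv : ∀ x ∈ U, (fderiv ℂ L x).comp (Λinv x) = ContinuousLinearMap.id ℂ E ∧
      (Λinv x).comp (fderiv ℂ L x) = ContinuousLinearMap.id ℂ E)
    (hΛinvc : ContinuousAt Λinv P)
    (hlim : Tendsto (fun x => (Λinv x).comp (fderiv ℂ S x)) (𝓝 P) (𝓝 0)) :
    Tendsto (fun x => fderiv ℂ F x) (𝓝 P) (𝓝 0) ∧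
      fderiv ℂ F P = 0 ∧
      ∀ μ : ℂ, Module.End.HasEigenvalue (fderiv ℂ F P : E →ₗ[ℂ] E) μ → ‖μ‖ < 1 :=
  stmt_2_general U hU P hP S L F heq hFc hFP hFd hSd hLd hSigc Λinv hΛinv hΛinvc hlim
end

section
/- Let E be a complex Banach space, U an open neighborhood of a point P ∈ E, and let S, L, F : E → E satisfy S(F(x)) + L(F(x)) = S(x) for all x ∈ U. Assume that F is continuous at P with F(P) = P and is Fréchet differentiable on U, that S and L are Fréchet differentiable on U with derivative maps Σ := DS and Λ := DL continuous at P, that Λ(x) is invertible for every x ∈ U with x ↦ Λ(x)⁻¹ continuous at P, and that Λ(x)⁻¹ ∘ Σ(x) → 0 in operator norm as x → P. Then P is a locally attracting fixed point of F: there exists ε > 0 such that for every x₀ with ‖x₀ − P‖ < ε the sequence of iterates defined by x_{n+1} = F(x_n) converges to P. -/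
open Filter Topology

/-!
By continuity the limit gives `Λ(P)⁻¹ ∘ Σ(P) = 0`, and invertibility of `Λ(P)` forces
`Σ(P) = 0`. Differentiating `S ∘ F + L ∘ F = S` at the fixed point gives
`Σ(P) ∘ DF(P) + Λ(P) ∘ DF(P) = Σ(P)`, hence `Λ(P) ∘ DF(P) = 0` and `DF(P) = 0`. A fixed point at which the derivative has norm `< 1`
is attracting: near it `F` contracts distances to `P` by a fixed factor `c < 1`.
-/

theorem ContinuousLinearMap.eq_zero_of_comp_eq_zero {𝕜 E E' G : Type*}
    [NontriviallyNormedField 𝕜] [NormedAddCommGroup E] [NormedSpace 𝕜 E]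
    [NormedAddCommGroup E'] [NormedSpace 𝕜 E'] [NormedAddCommGroup G] [NormedSpace 𝕜 G]
    {f : E' →L[𝕜] G} {g : G →L[𝕜] E'} (hgf : g.comp f = .id 𝕜 E')
    {h : E →L[𝕜] E'} (hfh : f.comp h = 0) : h = 0 :=
  calc h = (g.comp f).comp h := by rw [hgf, id_comp]
    _ = 0 := by rw [comp_assoc, hfh, comp_zero]

theorem HasFDerivAt.add_comp_eq_of_eventually_eq {𝕜 E G : Type*} [NontriviallyNormedField 𝕜]
    [NormedAddCommGroup E] [NormedSpace 𝕜 E] [NormedAddCommGroup G] [NormedSpace 𝕜 G]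
    {S L : E → G} {F : E → E} {σ l : E →L[𝕜] G} {φ : E →L[𝕜] E} {P : E}
    (hS : HasFDerivAt S σ P) (hL : HasFDerivAt L l P) (hF : HasFDerivAt F φ P) (hFP : F P = P)
    (heq : ∀ᶠ x in 𝓝 P, S (F x) + L (F x) = S x) :
    (σ + l).comp φ = σ := by
  rw [← hFP] at hS hL
  have hSLF : HasFDerivAt (fun x => S (F x) + L (F x)) ((σ + l).comp φ) P := by
    rw [ContinuousLinearMap.add_comp]
    exact (hS.comp P hF).add (hL.comp P hF)
  exact (hSLF.congr_of_eventuallyEq (heq.mono fun _ hx => hx.symm)).unique (hFP ▸ hS)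

theorem dist_iterate_le_pow_mul {X : Type*} [PseudoMetricSpace X] {F : X → X} {P : X}
    {c ε : ℝ} (hc0 : 0 ≤ c) (hc1 : c ≤ 1)
    (hF : ∀ x, dist x P < ε → dist (F x) P ≤ c * dist x P) {x : X} (hx : dist x P < ε)
    (n : ℕ) : dist (F^[n] x) P ≤ c ^ n * dist x P := by
  induction n with
  | zero => simp
  | succ n ih =>
    have hcn : c ^ n * dist x P ≤ dist x P :=
      mul_le_of_le_one_left dist_nonneg (pow_le_one₀ hc0 hc1)
    rw [Function.iterate_succ_apply', pow_succ', mul_assoc]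
    exact (hF _ (by linarith)).trans (mul_le_mul_of_nonneg_left ih hc0)

theorem tendsto_iterate_of_dist_le_mul {X : Type*} [PseudoMetricSpace X] {F : X → X} {P : X}
    {c ε : ℝ} (hc0 : 0 ≤ c) (hc1 : c < 1)
    (hF : ∀ x, dist x P < ε → dist (F x) P ≤ c * dist x P) {x : X} (hx : dist x P < ε) :
    Tendsto (fun n => F^[n] x) atTop (𝓝 P) := by
  refine tendsto_iff_dist_tendsto_zero.2 <| squeeze_zero (fun _ => dist_nonneg)
    (dist_iterate_le_pow_mul hc0 hc1.le hF hx) ?_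
  simpa using (tendsto_pow_atTop_nhds_zero_of_lt_one hc0 hc1).mul_const (dist x P)

theorem HasFDerivAt.exists_tendsto_iterate_of_norm_lt_one {𝕜 E : Type*}
    [NontriviallyNormedField 𝕜] [NormedAddCommGroup E] [NormedSpace 𝕜 E]
    {F : E → E} {φ : E →L[𝕜] E} {P : E} (hF : HasFDerivAt F φ P) (hFP : F P = P)
    (hφ : ‖φ‖ < 1) :
    ∃ ε > 0, ∀ x₀ : E, ‖x₀ - P‖ < ε → Tendsto (fun n => F^[n] x₀) atTop (𝓝 P) := by
  have hδ : 0 < (1 - ‖φ‖) / 2 := by linarith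
  have hcontract : ∀ᶠ x in 𝓝 P, dist (F x) P ≤ (1 + ‖φ‖) / 2 * dist x P := by
    filter_upwards [hF.isLittleO.def hδ] with x hx
    rw [hFP] at hx
    rw [dist_eq_norm, dist_eq_norm]
    calc ‖F x - P‖ ≤ ‖F x - P - φ (x - P)‖ + ‖φ (x - P)‖ := norm_le_norm_sub_add _ _
      _ ≤ (1 - ‖φ‖) / 2 * ‖x - P‖ + ‖φ‖ * ‖x - P‖ := add_le_add hx (φ.le_opNorm _)
      _ = (1 + ‖φ‖) / 2 * ‖x - P‖ := by ring
  obtain ⟨ε, hε, hball⟩ := Metric.eventually_nhds_iff.1 hcontract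
  refine ⟨ε, hε, fun x₀ hx₀ => ?_⟩
  exact tendsto_iterate_of_dist_le_mul (by positivity) (by linarith) (fun x hx => hball hx)
    (by rwa [dist_eq_norm])

theorem stmt_3_general {E : Type*} [NormedAddCommGroup E] [NormedSpace ℂ E]
    (U : Set E) (hU : IsOpen U) (P : E) (hP : P ∈ U) (S L F : E → E)
    (heq : ∀ x ∈ U, S (F x) + L (F x) = S x)
    (hFP : F P = P)
    (hFd : ∀ x ∈ U, DifferentiableAt ℂ F x)
    (hSd : ∀ x ∈ U, DifferentiableAt ℂ S x)
    (hLd : ∀ x ∈ U, DifferentiableAt ℂ L x)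
    (hSigc : ContinuousAt (fun x => fderiv ℂ S x) P)
    (Λinv : E → (E →L[ℂ] E))
    (hΛinv : ∀ x ∈ U, (fderiv ℂ L x).comp (Λinv x) = ContinuousLinearMap.id ℂ E ∧
      (Λinv x).comp (fderiv ℂ L x) = ContinuousLinearMap.id ℂ E)
    (hΛinvc : ContinuousAt Λinv P)
    (hlim : Tendsto (fun x => (Λinv x).comp (fderiv ℂ S x)) (𝓝 P) (𝓝 0)) :
    ∃ ε > 0, ∀ x₀ : E, ‖x₀ - P‖ < ε →
      Tendsto (fun n => F^[n] x₀) atTop (𝓝 P) := by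
  obtain ⟨hΛΛinv, hΛinvΛ⟩ := hΛinv P hP
  have hDS : fderiv ℂ S P = 0 :=
    ContinuousLinearMap.eq_zero_of_comp_eq_zero hΛΛinv <|
      tendsto_nhds_unique (hΛinvc.clm_comp hSigc).tendsto hlim
  have hDF : fderiv ℂ F P = 0 := by
    have h := (hSd P hP).hasFDerivAt.add_comp_eq_of_eventually_eq (hLd P hP).hasFDerivAt
      (hFd P hP).hasFDerivAt hFP (eventually_of_mem (hU.mem_nhds hP) heq)
    rw [hDS, zero_add] at h
    exact ContinuousLinearMap.eq_zero_of_comp_eq_zero hΛinvΛ h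
  have hF := (hFd P hP).hasFDerivAt
  rw [hDF] at hF
  exact hF.exists_tendsto_iterate_of_norm_lt_one hFP (by simp)

/-- Under the same hypotheses as the derivative statement, `P` is a locally attracting
fixed point of `F`: the iterates starting close enough to `P` converge to `P`. -/
theorem stmt_3 {E : Type*} [NormedAddCommGroup E] [NormedSpace ℂ E] [CompleteSpace E]
    (U : Set E) (hU : IsOpen U) (P : E) (hP : P ∈ U) (S L F : E → E)
    (heq : ∀ x ∈ U, S (F x) + L (F x) = S x)
    (hFc : ContinuousAt F P) (hFP : F P = P)
    (hFd : ∀ x ∈ U, DifferentiableAt ℂ F x)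
    (hSd : ∀ x ∈ U, DifferentiableAt ℂ S x)
    (hLd : ∀ x ∈ U, DifferentiableAt ℂ L x)
    (hSigc : ContinuousAt (fun x => fderiv ℂ S x) P)
    (hLamc : ContinuousAt (fun x => fderiv ℂ L x) P)
    (Λinv : E → (E →L[ℂ] E))
    (hΛinv : ∀ x ∈ U, (fderiv ℂ L x).comp (Λinv x) = ContinuousLinearMap.id ℂ E ∧
      (Λinv x).comp (fderiv ℂ L x) = ContinuousLinearMap.id ℂ E)
    (hΛinvc : ContinuousAt Λinv P)
    (hlim : Tendsto (fun x => (Λinv x).comp (fderiv ℂ S x)) (𝓝 P) (𝓝 0)) :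
    ∃ ε > 0, ∀ x₀ : E, ‖x₀ - P‖ < ε →
      Tendsto (fun n => F^[n] x₀) atTop (𝓝 P) :=
  stmt_3_general U hU P hP S L F heq hFP hFd hSd hLd hSigc Λinv hΛinv hΛinvc hlim
end

section
/- Let a > 0, b > 0 and α > β > 0 be real numbers, let δ > 0, and let θ′ : (0, δ) → (0, ∞) be a function satisfying a·θ′(θ)^α + b·θ′(θ)^β = a·θ^α for all θ ∈ (0, δ) and θ′(θ) → 0 as θ → 0⁺. Then θ′(θ) is asymptotically (a/b)^{1/β}·θ^{α/β}, i.e. θ′(θ) / ((a/b)^{1/β}·θ^{α/β}) → 1 as θ → 0⁺. -/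
/-!
Write `x = θ'(θ)` and `t = (x/θ)^α`. The equation gives `b x^β = a θ^α (1 - t)`, so
`x / ((a/b)^(1/β) θ^(α/β)) = (1 - t)^(1/β)`, and it suffices that `t → 0`. Dropping `a x^α` from
the equation gives `b x^β ≤ a θ^α`, hence `t ≤ (a/b) x^(α-β)`, which tends to `0` with `x`
because `α > β`.
-/

open Filter Topology

section
variable {a b α β x y : ℝ}

lemma div_rpow_le_mul_rpow_sub_of_mul_rpow_add_eq (ha : 0 ≤ a) (hb : 0 < b)
    (hx : 0 < x) (hy : 0 < y) (h : a * x ^ α + b * x ^ β = a * y ^ α) :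
    (x / y) ^ α ≤ a / b * x ^ (α - β) := by
  have hbound : b * x ^ β ≤ a * y ^ α := by
    nlinarith [mul_nonneg ha (Real.rpow_pos_of_pos hx α).le]
  calc (x / y) ^ α = x ^ (α - β) * x ^ β / y ^ α := by
        rw [Real.div_rpow hx.le hy.le, ← Real.rpow_add hx, sub_add_cancel]
    _ ≤ x ^ (α - β) * (a / b * y ^ α) / y ^ α := by
        gcongr
        rwa [div_mul_eq_mul_div, le_div_iff₀ hb, mul_comm]
    _ = a / b * x ^ (α - β) := by field_simp

lemma div_mul_rpow_eq_one_sub_rpow_of_mul_rpow_add_eq (ha : 0 < a) (hb : 0 < b) (hβ : β ≠ 0)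
    (hx : 0 < x) (hy : 0 < y) (h : a * x ^ α + b * x ^ β = a * y ^ α) :
    x / ((a / b) ^ (1 / β) * y ^ (α / β)) = (1 - (x / y) ^ α) ^ (1 / β) := by
  have hyα : 0 < y ^ α := Real.rpow_pos_of_pos hy α
  have hxβ : x ^ β = a / b * y ^ α * (1 - (x / y) ^ α) := by
    rw [Real.div_rpow hx.le hy.le]
    field_simp
    linarith
  have hsub : 0 ≤ 1 - (x / y) ^ α := by
    refine nonneg_of_mul_nonneg_right (hxβ ▸ (Real.rpow_pos_of_pos hx β).le) ?_
    positivity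
  have hx_eq : x = (x ^ β) ^ (1 / β) := by
    rw [← Real.rpow_mul hx.le, mul_one_div_cancel hβ, Real.rpow_one]
  have hyαβ : (y ^ α) ^ (1 / β) = y ^ (α / β) := by
    rw [← Real.rpow_mul hy.le, mul_one_div]
  conv_lhs => rw [hx_eq]
  rw [hxβ, Real.mul_rpow (by positivity) hsub, Real.mul_rpow (by positivity) hyα.le,
    hyαβ, mul_div_cancel_left₀ _ (by positivity)]

theorem tendsto_div_mul_rpow_of_mul_rpow_add_eq {ι : Type*} {l : Filter ι} {x y : ι → ℝ}
    (ha : 0 < a) (hb : 0 < b) (hβ : 0 < β) (hαβ : β < α)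
    (hx : ∀ᶠ i in l, 0 < x i) (hy : ∀ᶠ i in l, 0 < y i)
    (h : ∀ᶠ i in l, a * x i ^ α + b * x i ^ β = a * y i ^ α) (hx0 : Tendsto x l (𝓝 0)) :
    Tendsto (fun i => x i / ((a / b) ^ (1 / β) * y i ^ (α / β))) l (𝓝 1) := by
  have hbound : Tendsto (fun i => a / b * x i ^ (α - β)) l (𝓝 0) := by
    simpa [Real.zero_rpow (sub_pos.2 hαβ).ne'] using
      (hx0.rpow_const (Or.inr (sub_pos.2 hαβ).le)).const_mul (a / b)
  have ht : Tendsto (fun i => (x i / y i) ^ α) l (𝓝 0) := by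
    refine tendsto_of_tendsto_of_tendsto_of_le_of_le' tendsto_const_nhds hbound ?_ ?_
    · filter_upwards [hx, hy] with i hxi hyi using (Real.rpow_pos_of_pos (div_pos hxi hyi) α).le
    · filter_upwards [hx, hy, h] with i hxi hyi hi
      exact div_rpow_le_mul_rpow_sub_of_mul_rpow_add_eq ha.le hb hxi hyi hi
  have hlim : Tendsto (fun i => (1 - (x i / y i) ^ α) ^ (1 / β)) l (𝓝 1) := by
    simpa using (ht.const_sub 1).rpow_const (Or.inl (by norm_num))
  refine hlim.congr' ?_
  filter_upwards [hx, hy, h] with i hxi hyi hi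
  exact (div_mul_rpow_eq_one_sub_rpow_of_mul_rpow_add_eq ha hb hβ.ne' hxi hyi hi).symm

end

/-- If `θ' : (0, δ) → (0, ∞)` satisfies `a θ'(θ)^α + b θ'(θ)^β = a θ^α` and
`θ'(θ) → 0` as `θ → 0⁺`, with `a, b > 0` and `α > β > 0`, then
`θ'(θ) ~ (a/b)^(1/β) · θ^(α/β)` as `θ → 0⁺`. -/
theorem stmt_8 (a b α β δ : ℝ) (ha : 0 < a) (hb : 0 < b) (hβ : 0 < β) (hαβ : β < α)
    (hδ : 0 < δ) (θ' : ℝ → ℝ)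
    (hpos : ∀ θ ∈ Set.Ioo (0 : ℝ) δ, 0 < θ' θ)
    (heq : ∀ θ ∈ Set.Ioo (0 : ℝ) δ, a * θ' θ ^ α + b * θ' θ ^ β = a * θ ^ α)
    (hlim : Tendsto θ' (𝓝[>] (0 : ℝ)) (𝓝 0)) :
    Tendsto (fun θ => θ' θ / ((a / b) ^ (1 / β) * θ ^ (α / β)))
      (𝓝[>] (0 : ℝ)) (𝓝 1) := by
  have hmem : ∀ᶠ θ in 𝓝[>] (0 : ℝ), θ ∈ Set.Ioo (0 : ℝ) δ :=
    Ioo_mem_nhdsGT_of_mem (Set.left_mem_Ico.mpr hδ)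
  exact tendsto_div_mul_rpow_of_mul_rpow_add_eq ha hb hβ hαβ (hmem.mono hpos)
    (hmem.mono fun _ hθ => hθ.1) (hmem.mono heq) hlim
end
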